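/- Let Q be a digraph all of whose Coxeter components are single points (i.e. Q is an oriented graph: all connections are arrows), and suppose Q has no oriented cycle. Then the Hecke–Kiselman monoid H_Q is a quotient of the Kiselman monoid K_n (n = |Q|), and hence is finite. -/

import Mathlib

open FreeMonoid

structure HKGraph (V : Type) where
  edge : V → V → Prop
  arrow : V → V → Prop
  edge_symm : ∀ i j, edge i j → edge j i
  edge_irrefl : ∀ i, ¬ edge i i
  arrow_irrefl : ∀ i, ¬ arrow i i
  edge_not_arrow : ∀ i j, edge i j → ¬ arrow i j
  arrow_asymm : ∀ i j, arrow i j → ¬ arrow j i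

namespace HKGraph
variable {V : Type}

/-- The defining relations of the Hecke–Kiselman monoid of a digraph. -/
inductive Rel (Q : HKGraph V) : FreeMonoid V → FreeMonoid V → Prop
  | idem (i : V) : Rel Q (of i * of i) (of i)
  | comm (i j : V) : i ≠ j → ¬ Q.edge i j → ¬ Q.arrow i j → ¬ Q.arrow j i →
      Rel Q (of i * of j) (of j * of i)
  | braid (i j : V) : Q.edge i j → Rel Q (of i * of j * of i) (of j * of i * of j)
  | arrow_left (i j : V) : Q.arrow i j → Rel Q (of i * of j) (of i * of j * of i)
  | arrow_right (i j : V) : Q.arrow i j → Rel Q (of i * of j) (of j * of i * of j)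

/-- The Hecke–Kiselman monoid of a digraph. -/
abbrev HK (Q : HKGraph V) : Type := (conGen Q.Rel).Quotient

/-- The idempotent generator of `HK Q` attached to a vertex. -/
def gen (Q : HKGraph V) (i : V) : HK Q := Con.mk' _ (of i)

end HKGraph

namespace HKGraph

/-- An oriented cycle: `n ≥ 3` distinct vertices cyclically joined by arrows. -/
def HasOrientedCycle {V : Type} (Q : HKGraph V) : Prop :=
  ∃ n : ℕ, ∃ f : Fin (n + 3) → V, Function.Injective f ∧
    ∀ i : Fin (n + 3), Q.arrow (f i) (f (i + 1))

end HKGraph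

/-!
Number the vertices along a linear extension of the arrow relation, which exists because `Q` has
no oriented cycle. For `i < j` the generators of `g i` and `g j` either span an arrow or commute
(they are idempotent), and in both cases they satisfy the Kiselman relations
`a_i a_j a_i = a_i a_j = a_j a_i a_j`, so `a_i ↦ gen (g i)` is a surjection `K_n → H_Q`.

`K_n` is finite: if `i` lies below all letters of `w`, then `a_i w a_i = a_i w`, so the submonoid
generated by `a_i, …, a_n` consists of the elements `w` and `u a_i v` with `u, v, w` in the submonoid
generated by `a_{i+1}, …, a_n`.
-/

section IdempotentAbsorption

open Set Submonoid

variable {M : Type*} [Monoid M] {e : M} {s : Set M}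

theorem mul_mul_eq_mul_of_mem_closure (he : e * e = e) (hs : ∀ x ∈ s, e * x * e = e * x)
    {w : M} (hw : w ∈ closure s) : e * w * e = e * w := by
  induction hw using closure_induction with
  | mem x hx => exact hs x hx
  | one => simpa using he
  | mul x y _ _ hx hy =>
    calc e * (x * y) * e = (e * x * e) * y * e := by rw [hx]; simp only [mul_assoc]
      _ = e * x * (e * y * e) := by simp only [mul_assoc]
      _ = e * x * e * y := by rw [hy]; simp only [mul_assoc]
      _ = e * (x * y) := by rw [hx, mul_assoc]

theorem finite_closure_insert_of_mul_mul_eq_mul (hs : (closure s : Set M).Finite)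
    (habs : ∀ w ∈ closure s, e * w * e = e * w) : (closure (insert e s) : Set M).Finite := by
  set N := closure s
  let T : Submonoid M :=
    { carrier := N ∪ image2 (fun u v => u * e * v) N N
      one_mem' := Or.inl N.one_mem
      mul_mem' := by
        rintro _ _ (hx | ⟨u, hu, v, hv, rfl⟩) (hy | ⟨u', hu', v', hv', rfl⟩)
        · exact Or.inl (N.mul_mem hx hy)
        · exact Or.inr ⟨_, N.mul_mem hx hu', v', hv', by simp only [mul_assoc]⟩
        · exact Or.inr ⟨u, hu, _, N.mul_mem hv hy, by simp only [mul_assoc]⟩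
        · refine Or.inr ⟨u, hu, v * u' * v', N.mul_mem (N.mul_mem hv hu') hv', ?_⟩
          calc u * e * (v * u' * v') = u * (e * (v * u') * e) * v' := by
                rw [habs _ (N.mul_mem hv hu')]; simp only [mul_assoc]
            _ = u * e * v * (u' * e * v') := by simp only [mul_assoc] }
  have hle : closure (insert e s) ≤ T :=
    closure_le.mpr <| insert_subset (Or.inr ⟨1, N.one_mem, 1, N.one_mem, by simp⟩)
      (subset_closure.trans subset_union_left)
  exact (hs.union (hs.image2 _ hs)).subset hle

theorem finite_closure_range_of_mul_mul_eq_mul {ι : Type*} [LinearOrder ι] [Finite ι]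
    (a : ι → M) (hidem : ∀ i, a i * a i = a i)
    (habs : ∀ i j, i < j → a i * a j * a i = a i * a j) :
    (closure (range a) : Set M).Finite := by
  classical
  have := Fintype.ofFinite ι
  suffices ∀ t : Finset ι, (closure (a '' t) : Set M).Finite by
    simpa [← image_univ] using this Finset.univ
  intro t
  induction t using Finset.induction_on_min with
  | empty => simp
  | insert i t hmin ih =>
    rw [Finset.coe_insert, image_insert_eq]
    refine finite_closure_insert_of_mul_mul_eq_mul ih
      fun w hw => mul_mul_eq_mul_of_mem_closure (hidem i) ?_ hw
    rintro _ ⟨j, hj, rfl⟩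
    exact habs i j (hmin j hj)

end IdempotentAbsorption

namespace List

variable {α : Type*}

theorem exists_eq_append_cons_append_cons_of_not_nodup :
    ∀ {l : List α}, ¬ l.Nodup → ∃ u d v w, l = u ++ d :: v ++ d :: w
  | [], h => absurd nodup_nil h
  | a :: t, h => by
    by_cases hat : a ∈ t
    · obtain ⟨v, w, rfl⟩ := append_of_mem hat
      exact ⟨[], a, v, w, rfl⟩
    · obtain ⟨u, d, v, w, rfl⟩ :=
        exists_eq_append_cons_append_cons_of_not_nodup fun hnd => h (nodup_cons.mpr ⟨hat, hnd⟩)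
      exact ⟨a :: u, d, v, w, rfl⟩

theorem exists_nodup_of_isChain_cons_append_singleton {r : α → α → Prop} {b : α} {t : List α}
    (h : IsChain r (b :: t ++ [b])) : ∃ c s, (c :: s).Nodup ∧ IsChain r (c :: s ++ [c]) := by
  induction hn : t.length using Nat.strong_induction_on generalizing b t with
  | _ n ih =>
    by_cases hnd : (b :: t).Nodup
    · exact ⟨b, t, hnd, h⟩
    -- cut out the shorter closed chain between two occurrences of a repeated vertex
    obtain ⟨u, d, v, w, hdup⟩ := exists_eq_append_cons_append_cons_of_not_nodup hnd
    have hinfix : d :: v ++ [d] <:+: b :: t ++ [b] := by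
      rw [hdup]
      exact ⟨u, w ++ [b], by simp⟩
    have hlen := congrArg length hdup
    simp only [length_cons, length_append] at hlen
    exact ih v.length (by omega) (h.infix hinfix) rfl

end List

theorem exists_fin_equiv_lt_of_rel {V : Type*} [Fintype V] {r : V → V → Prop}
    (hr : ∀ a, ¬ Relation.TransGen r a a) :
    ∃ e : Fin (Fintype.card V) ≃ V, ∀ i j, r (e i) (e j) → i < j := by
  have : IsStrictOrder V (Relation.TransGen r) :=
    { irrefl := hr, trans := fun _ _ _ => Relation.TransGen.trans }
  let _ := partialOrderOfSO (Relation.TransGen r)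
  let _ : Fintype (LinearExtension V) := ‹Fintype V›
  let e := Fintype.orderIsoFinOfCardEq (LinearExtension V) rfl
  refine ⟨e.toEquiv, fun i j hij => lt_of_le_of_ne ?_ ?_⟩
  · exact e.le_iff_le.mp ((toLinearExtension (α := V)).monotone (Or.inr (.single hij)))
  · rintro rfl
    exact hr _ (.single hij)

namespace HKGraph

variable {V : Type} (Q : HKGraph V)

theorem mk'_eq_of_rel {x y : FreeMonoid V} (h : Q.Rel x y) :
    Con.mk' (conGen Q.Rel) x = Con.mk' (conGen Q.Rel) y :=
  (Con.eq _).mpr (ConGen.Rel.of _ _ h)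

theorem gen_mul_self (i : V) : Q.gen i * Q.gen i = Q.gen i := by
  simpa only [gen, map_mul] using Q.mk'_eq_of_rel (.idem i)

theorem gen_mul_comm {i j : V} (hne : i ≠ j) (he : ¬ Q.edge i j) (hij : ¬ Q.arrow i j)
    (hji : ¬ Q.arrow j i) : Q.gen i * Q.gen j = Q.gen j * Q.gen i := by
  simpa only [gen, map_mul] using Q.mk'_eq_of_rel (.comm i j hne he hij hji)

theorem gen_mul_gen_mul_gen_of_arrow_left {i j : V} (h : Q.arrow i j) :
    Q.gen i * Q.gen j * Q.gen i = Q.gen i * Q.gen j := by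
  simpa only [gen, map_mul] using (Q.mk'_eq_of_rel (.arrow_left i j h)).symm

theorem gen_mul_gen_mul_gen_of_arrow_right {i j : V} (h : Q.arrow i j) :
    Q.gen j * Q.gen i * Q.gen j = Q.gen i * Q.gen j := by
  simpa only [gen, map_mul] using (Q.mk'_eq_of_rel (.arrow_right i j h)).symm

theorem gen_mul_gen_mul_gen_left_of_not_arrow {i j : V} (hne : i ≠ j) (he : ¬ Q.edge i j)
    (hji : ¬ Q.arrow j i) : Q.gen i * Q.gen j * Q.gen i = Q.gen i * Q.gen j := by
  by_cases hij : Q.arrow i j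
  · exact Q.gen_mul_gen_mul_gen_of_arrow_left hij
  · rw [mul_assoc, ← Q.gen_mul_comm hne he hij hji, ← mul_assoc, gen_mul_self]

theorem gen_mul_gen_mul_gen_right_of_not_arrow {i j : V} (hne : i ≠ j) (he : ¬ Q.edge i j)
    (hji : ¬ Q.arrow j i) : Q.gen j * Q.gen i * Q.gen j = Q.gen i * Q.gen j := by
  by_cases hij : Q.arrow i j
  · exact Q.gen_mul_gen_mul_gen_of_arrow_right hij
  · rw [mul_assoc, Q.gen_mul_comm hne he hij hji, ← mul_assoc, gen_mul_self]

theorem closure_range_gen : Submonoid.closure (Set.range Q.gen) = ⊤ := by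
  rw [show Set.range Q.gen = Con.mk' (conGen Q.Rel) '' Set.range FreeMonoid.of from
      Set.range_comp _ _, ← MonoidHom.map_mclosure, FreeMonoid.closure_range_of,
    ← MonoidHom.mrange_eq_map, MonoidHom.mrange_eq_top]
  exact Con.mk'_surjective

theorem surjective_of_forall_gen_mem_mrange {M : Type*} [Monoid M] (f : M →* Q.HK)
    (h : ∀ i, Q.gen i ∈ MonoidHom.mrange f) : Function.Surjective f := by
  rw [← MonoidHom.mrange_eq_top, eq_top_iff, ← Q.closure_range_gen, Submonoid.closure_le]
  rintro _ ⟨i, rfl⟩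
  exact h i

theorem finite_of_arrow_of_lt [LinearOrder V] [Finite V] (h : ∀ i j, i < j → Q.arrow i j) :
    Finite Q.HK := by
  have hfin := finite_closure_range_of_mul_mul_eq_mul Q.gen Q.gen_mul_self
    fun i j hij => Q.gen_mul_gen_mul_gen_of_arrow_left (h i j hij)
  rw [Q.closure_range_gen, Submonoid.coe_top] at hfin
  exact Set.finite_univ_iff.mp hfin

theorem hasOrientedCycle_of_nodup_isChain {c x y : V} {s : List V}
    (hnd : (c :: x :: y :: s).Nodup) (h : List.IsChain Q.arrow (c :: x :: y :: s ++ [c])) :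
    Q.HasOrientedCycle := by
  refine ⟨s.length, (c :: x :: y :: s).get, List.nodup_iff_injective_get.mp hnd, fun i => ?_⟩
  induction i using Fin.lastCases with
  | last =>
    have := h.getElem (s.length + 2) (by simp)
    rw [List.getElem_append_left (by simp), List.getElem_append_right (by simp)] at this
    simpa using this
  | cast j =>
    have := h.getElem j (by simp)
    rw [List.getElem_append_left (by simp), List.getElem_append_left (by simp; omega)] at this
    simpa [Fin.coeSucc_eq_succ] using this

theorem not_transGen_arrow_self (hcyc : ¬ Q.HasOrientedCycle) (a : V) :
    ¬ Relation.TransGen Q.arrow a a := by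
  intro ha
  obtain ⟨b, hab, hba⟩ := Relation.TransGen.tail'_iff.mp ha
  obtain ⟨l, hl, hlast⟩ := List.exists_isChain_cons_of_relationReflTransGen hab
  have hclosed : List.IsChain Q.arrow (a :: l ++ [a]) :=
    hl.append (.singleton a) (by simp [List.getLast?_eq_some_getLast, hlast, hba])
  obtain ⟨c, s, hnd, hc⟩ := List.exists_nodup_of_isChain_cons_append_singleton hclosed
  match s, hnd, hc with
  | [], _, hc => exact Q.arrow_irrefl c (List.isChain_pair.mp hc)
  | [x], _, hc =>
    obtain ⟨hcx, hxc⟩ := List.isChain_cons_cons.mp hc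
    exact Q.arrow_asymm c x hcx (List.isChain_pair.mp hxc)
  | x :: y :: s, hnd, hc => exact hcyc (Q.hasOrientedCycle_of_nodup_isChain hnd hc)

theorem exists_surjective_hom_of_equiv_lt {ι : Type} [LinearOrder ι] (QK : HKGraph ι)
    (hKarrow : ∀ i j, QK.arrow i j ↔ i < j) (hKedge : ∀ i j, ¬ QK.edge i j)
    (hedge : ∀ i j, ¬ Q.edge i j) (g : ι ≃ V) (hg : ∀ i j, Q.arrow (g i) (g j) → i < j) :
    ∃ f : QK.HK →* Q.HK, Function.Surjective f := by
  let φ : FreeMonoid ι →* Q.HK := FreeMonoid.lift (Q.gen ∘ g)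
  have hφ : ∀ x y, QK.Rel x y → Con.ker φ x y := by
    intro x y h
    rw [Con.ker_rel]
    cases h with
    | idem i => exact Q.gen_mul_self (g i)
    | comm i j hne _ hij hji =>
      rcases hne.lt_or_gt with h | h
      · exact absurd ((hKarrow i j).mpr h) hij
      · exact absurd ((hKarrow j i).mpr h) hji
    | braid i j he => exact absurd he (hKedge i j)
    | arrow_left i j h =>
      have hij := (hKarrow i j).mp h
      exact (Q.gen_mul_gen_mul_gen_left_of_not_arrow (g.injective.ne hij.ne) (hedge _ _)
        fun h => (hg j i h).asymm hij).symm
    | arrow_right i j h =>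
      have hij := (hKarrow i j).mp h
      exact (Q.gen_mul_gen_mul_gen_right_of_not_arrow (g.injective.ne hij.ne) (hedge _ _)
        fun h => (hg j i h).asymm hij).symm
  let f : QK.HK →* Q.HK := Con.lift _ φ (Con.conGen_le.mpr hφ)
  refine ⟨f, Q.surjective_of_forall_gen_mem_mrange f fun v => ⟨QK.gen (g.symm v), ?_⟩⟩
  simp [f, φ, gen]

end HKGraph

/-- If `Q` is an oriented graph (all connections are arrows, i.e. all Coxeter
components are points) with no oriented cycle, then `H_Q` is a quotient of the
Kiselman monoid `K_n` with `n = |Q|` (presented here as the Hecke–Kiselman monoid of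
the complete oriented graph with arrows `i → j` for `i < j`), and hence is finite. -/
theorem hk_oriented_acyclic_quotient_of_kiselman
    {V : Type} [Fintype V] (Q : HKGraph V)
    (hedge : ∀ i j, ¬ Q.edge i j) (hcyc : ¬ Q.HasOrientedCycle)
    (QK : HKGraph (Fin (Fintype.card V)))
    (hKarrow : ∀ i j, QK.arrow i j ↔ i < j) (hKedge : ∀ i j, ¬ QK.edge i j) :
    (∃ f : QK.HK →* Q.HK, Function.Surjective f) ∧ Finite Q.HK := by
  obtain ⟨g, hg⟩ := exists_fin_equiv_lt_of_rel (Q.not_transGen_arrow_self hcyc)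
  obtain ⟨f, hf⟩ := Q.exists_surjective_hom_of_equiv_lt QK hKarrow hKedge hedge g hg
  have : Finite QK.HK := QK.finite_of_arrow_of_lt fun i j => (hKarrow i j).mpr
  exact ⟨⟨f, hf⟩, Finite.of_surjective f hf⟩
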